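/- arXiv:2306.03119 — 4 statements merged into one kernel-verified Lean document; each statement's English description precedes it below -/
import Mathlib

section
/- Let A be a commutative Noetherian ring and let B be a commutative A-algebra which can be written as a filtered colimit B ≅ colim B_α of finitely presented A-algebras such that B is flat over each B_α. Then B is a coherent ring, i.e., every finitely generated ideal of B is finitely presented as a B-module. -/
/-!
STATEMENT 0: If `A` is a commutative Noetherian ring and `B` is a commutative `A`-algebra
which is a filtered colimit `B ≅ colim Bα` of finitely presented `A`-algebras such that `B`
is flat over each `Bα`, then `B` is coherent: every finitely generated ideal of `B` is
finitely presented as a `B`-module.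
-/

universe u

open TensorProduct

theorem tamely_presented_over_noetherian_is_coherent
    (A : Type u) [CommRing A] [IsNoetherianRing A]
    (B : Type u) [CommRing B] [Algebra A B]
    -- a filtered (directed) diagram of `A`-algebras
    (ι : Type u) [Preorder ι] [IsDirected ι (· ≤ ·)] [Nonempty ι]
    (Bα : ι → Type u) [∀ i, CommRing (Bα i)] [∀ i, Algebra A (Bα i)]
    (t : ∀ i j, i ≤ j → (Bα i →ₐ[A] Bα j))
    (htt : ∀ i j k (hij : i ≤ j) (hjk : j ≤ k),
      (t j k hjk).comp (t i j hij) = t i k (le_trans hij hjk))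
    -- each term is finitely presented over `A`
    (hfp : ∀ i, Algebra.FinitePresentation A (Bα i))
    -- a compatible cocone exhibiting `B` as the filtered colimit of the diagram
    (g : ∀ i, Bα i →ₐ[A] B)
    (hg : ∀ i j (h : i ≤ j), (g j).comp (t i j h) = g i)
    (hsurj : ∀ b : B, ∃ i x, g i x = b)
    (heq : ∀ i (x y : Bα i), g i x = g i y → ∃ j, ∃ h : i ≤ j, t i j h x = t i j h y)
    -- `B` is flat over each `Bα i`
    (hflat : ∀ i, letI : Algebra (Bα i) B := (g i).toRingHom.toAlgebra
      Module.Flat (Bα i) B) :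
    ∀ I : Ideal B, I.FG → Module.FinitePresentation B I := by
  classical
  intro I hI
  obtain ⟨s, hs⟩ := hI
  choose idx x hx using hsurj
  obtain ⟨i₀, hi₀⟩ := (s.image idx).exists_le
  have hle : ∀ b ∈ s, idx b ≤ i₀ := fun b hb => hi₀ _ (Finset.mem_image_of_mem idx hb)
  letI : Algebra (Bα i₀) B := (g i₀).toRingHom.toAlgebra
  haveI hfl : Module.Flat (Bα i₀) B := hflat i₀
  haveI := hfp i₀
  haveI : Algebra.FiniteType A (Bα i₀) := Algebra.FiniteType.of_finitePresentation
  haveI : IsNoetherianRing (Bα i₀) := Algebra.FiniteType.isNoetherianRing A (Bα i₀)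
  -- transport the generators to `Bα i₀`
  set y : s → Bα i₀ := fun b => t (idx b) i₀ (hle b b.2) (x b) with hy_def
  have hy : ∀ b : s, g i₀ (y b) = (b : B) := by
    intro b
    have h1 := AlgHom.congr_fun (hg (idx (b : B)) i₀ (hle b b.2)) (x (b : B))
    exact h1.trans (hx (b : B))
  set J : Ideal (Bα i₀) := Ideal.span (Set.range y) with hJ_def
  haveI : Module.Finite (Bα i₀) J :=
    ⟨(Submodule.fg_top J).mpr (IsNoetherian.noetherian J)⟩
  haveI : Module.FinitePresentation (Bα i₀) J :=
    Module.finitePresentation_of_finite _ _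
  have halg : ∀ r : Bα i₀, algebraMap (Bα i₀) B r = g i₀ r := fun r => rfl
  -- the natural `B`-linear map `B ⊗ J → B`
  set φ : B ⊗[Bα i₀] J →ₗ[B] B :=
    (TensorProduct.AlgebraTensorModule.rid (Bα i₀) B B).toLinearMap ∘ₗ
      (J.subtype.baseChange B) with hφ_def
  have hφ_tmul : ∀ (b : B) (j : J), φ (b ⊗ₜ j) = b * g i₀ (j : Bα i₀) := by
    intro b j
    simp only [hφ_def, LinearMap.comp_apply, LinearMap.baseChange_tmul,
      LinearEquiv.coe_coe, TensorProduct.AlgebraTensorModule.rid_tmul,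
      Submodule.coe_subtype]
    rw [Algebra.smul_def, halg, mul_comm]
  have hφinj : Function.Injective φ := by
    apply Function.Injective.comp (TensorProduct.AlgebraTensorModule.rid (Bα i₀) B B).injective
    have h2 := Module.Flat.lTensor_preserves_injective_linearMap (M := B)
      J.subtype J.injective_subtype
    rwa [← LinearMap.baseChange_eq_ltensor] at h2
  have hmapJ : ∀ r ∈ J, g i₀ r ∈ I := by
    have : J.map (g i₀).toRingHom ≤ I := by
      rw [Ideal.map_le_iff_le_comap, hJ_def, Ideal.span_le]
      rintro _ ⟨b, rfl⟩
      show g i₀ (y b) ∈ I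
      rw [hy b]
      exact hs ▸ Ideal.subset_span b.2
    intro r hr
    exact this (Ideal.mem_map_of_mem _ hr)
  have hrange : LinearMap.range φ = I := by
    apply le_antisymm
    · rintro _ ⟨z, rfl⟩
      induction z using TensorProduct.induction_on with
      | zero => simp
      | tmul b j =>
        rw [hφ_tmul]
        exact I.mul_mem_left b (hmapJ _ j.2)
      | add u v hu hv => rw [map_add]; exact I.add_mem hu hv
    · rw [← hs]
      refine Ideal.span_le.mpr ?_
      intro b hb
      refine ⟨(1 : B) ⊗ₜ ⟨y ⟨b, hb⟩, Ideal.subset_span ⟨⟨b, hb⟩, rfl⟩⟩, ?_⟩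
      rw [hφ_tmul, one_mul, hy ⟨b, hb⟩]
  -- conclude
  let e : (B ⊗[Bα i₀] J) ≃ₗ[B] I :=
    (LinearEquiv.ofInjective φ hφinj).trans (LinearEquiv.ofEq _ _ hrange)
  exact Module.finitePresentation_of_surjective e.toLinearMap e.surjective
    (by simpa [LinearEquiv.ker] using Submodule.fg_bot)
end

section
/- Let f : A → B and g : B → C be homomorphisms of commutative rings such that g ∘ f is faithfully flat (i.e., C is faithfully flat as an A-module) and g is faithfully flat (C is faithfully flat as a B-module). Then f is faithfully flat, i.e., B is a faithfully flat A-module. -/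
/-!
STATEMENT 2: If `g ∘ f` and `g` are faithfully flat ring homomorphisms, then so is `f`.
-/

universe u

set_option maxHeartbeats 800000
set_option synthInstance.maxHeartbeats 400000

open TensorProduct

/-- Tensoring with a faithfully flat module reflects injectivity. -/
lemma lTensor_reflects_injective
    (B : Type*) (C : Type*) [CommRing B] [CommRing C] [Algebra B C]
    [Module.FaithfullyFlat B C]
    {N N' : Type*} [AddCommGroup N] [Module B N] [AddCommGroup N'] [Module B N']
    (f : N →ₗ[B] N') (h : Function.Injective (LinearMap.lTensor C f)) :
    Function.Injective f := by
  set K := LinearMap.ker f with hK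
  have hcomp : f ∘ₗ K.subtype = 0 := by
    ext ⟨x, hx⟩; exact hx
  have h0 : LinearMap.lTensor C f ∘ₗ LinearMap.lTensor C K.subtype = 0 := by
    rw [← LinearMap.lTensor_comp, hcomp, LinearMap.lTensor_zero]
  have hzero : ∀ x : C ⊗[B] K, LinearMap.lTensor C K.subtype x = 0 := by
    intro x
    apply h
    have := congr($h0 x)
    simpa using this
  have hinj : Function.Injective (LinearMap.lTensor C K.subtype) :=
    Module.Flat.lTensor_preserves_injective_linearMap K.subtype K.injective_subtype
  have : Subsingleton (C ⊗[B] K) := by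
    refine subsingleton_iff_forall_eq 0 |>.2 fun x => hinj ?_
    rw [hzero x, map_zero]
  have : Subsingleton K := Module.FaithfullyFlat.lTensor_reflects_triviality B C K
  rw [← LinearMap.ker_eq_bot, ← hK]
  exact Submodule.eq_bot_of_subsingleton

theorem faithfullyFlat_of_comp
    (A B C : Type u) [CommRing A] [CommRing B] [CommRing C]
    [Algebra A B] [Algebra B C] [Algebra A C] [IsScalarTower A B C]
    [Module.FaithfullyFlat A C] [Module.FaithfullyFlat B C] :
    Module.FaithfullyFlat A B := by
  rw [Module.FaithfullyFlat.iff_flat_and_lTensor_reflects_triviality]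
  constructor
  · -- flatness of B over A
    rw [Module.Flat.iff_lTensor_injective']
    intro I
    -- the B-linear version of `lTensor B I.subtype`
    set ψ : B ⊗[A] I →ₗ[B] B ⊗[A] A :=
      AlgebraTensorModule.map (LinearMap.id : B →ₗ[B] B) I.subtype with hψ
    have hcoe : ∀ x, LinearMap.lTensor B (I.subtype) x = ψ x := by
      intro x
      induction x using TensorProduct.induction_on with
      | zero => simp
      | tmul b i => simp [hψ]
      | add x y hx hy => simp [map_add, hx, hy]
    suffices hinjψ : Function.Injective ψ by
      intro x y hxy
      apply hinjψ
      rw [← hcoe, ← hcoe, hxy]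
    apply lTensor_reflects_injective B C ψ
    -- identify `lTensor C ψ` with `lTensor C I.subtype` via cancelBaseChange
    set e : C ⊗[B] (B ⊗[A] I) ≃ₗ[B] C ⊗[A] I :=
      AlgebraTensorModule.cancelBaseChange A B B C I with he
    set e' : C ⊗[B] (B ⊗[A] A) ≃ₗ[B] C ⊗[A] A :=
      AlgebraTensorModule.cancelBaseChange A B B C A with he'
    have key : ∀ z : C ⊗[B] (B ⊗[A] I),
        e' (LinearMap.lTensor C ψ z) = LinearMap.lTensor C (I.subtype) (e z) := by
      intro z
      induction z using TensorProduct.induction_on with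
      | zero => simp
      | tmul c x =>
        induction x using TensorProduct.induction_on with
        | zero => simp
        | tmul b i => simp [hψ, he, he']
        | add x y hx hy => simp only [tmul_add, map_add, hx, hy]
      | add x y hx hy => simp only [map_add, hx, hy]
    intro x y hxy
    apply e.injective
    apply Module.Flat.lTensor_preserves_injective_linearMap (M := C) I.subtype I.injective_subtype
    rw [← key, ← key, hxy]
  · -- faithfulness
    intro N _ _ hsub
    haveI : Subsingleton (B ⊗[A] N) := hsub
    haveI : Subsingleton (C ⊗[B] (B ⊗[A] N)) := inferInstance
    haveI : Subsingleton (C ⊗[A] N) :=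
      (AlgebraTensorModule.cancelBaseChange A B B C N).symm.toEquiv.injective.subsingleton
    exact Module.FaithfullyFlat.lTensor_reflects_triviality A C N
end

section
/- Let A be a coherent commutative ring, M a finitely presented A-module, and N a finitely presented A-module. Then for every n ≥ 0, the module Ext^n_A(M, N) is a finitely presented A-module. -/
/-!
Over a coherent ring the finitely presented modules are closed under kernels and cokernels,
and every finitely presented module has a resolution by finite free modules, obtained by
repeatedly taking kernels of surjections from finite free modules. Applying `Hom(-, N)` turns
this resolution into a complex of finitely presented modules `N ^ k`, whose cohomology
`Ext^n(M, N)` is then finitely presented.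
-/

universe u

open CategoryTheory

class IsCoherentRing (A : Type*) [CommRing A] : Prop where
  finitePresentation_of_fg : ∀ I : Ideal A, I.FG → Module.FinitePresentation A I

section Coherent

variable {A : Type*} [CommRing A] [IsCoherentRing A]

theorem IsCoherentRing.finitePresentation_of_injective_pi {P : Type*} [AddCommGroup P]
    [Module A P] [Module.Finite A P] {k : ℕ} (f : P →ₗ[A] Fin k → A)
    (hf : Function.Injective f) : Module.FinitePresentation A P := by
  induction k generalizing P with
  | zero =>
    have : Subsingleton P := hf.subsingleton
    infer_instance
  | succ k ih =>
    -- `P` is an extension of a finitely generated ideal (the image of the last coordinate)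
    -- by the kernel of the last coordinate, which embeds into `A ^ k`.
    let q := (LinearMap.proj (Fin.last k) ∘ₗ f).rangeRestrict
    have hq : Function.Surjective q := LinearMap.surjective_rangeRestrict _
    have : Module.FinitePresentation A (LinearMap.range (LinearMap.proj (Fin.last k) ∘ₗ f)) :=
      finitePresentation_of_fg _ (Submodule.fg_range _)
    have : Module.Finite A (LinearMap.ker q) := .of_fg (Module.FinitePresentation.fg_ker q hq)
    have : Module.FinitePresentation A (LinearMap.ker q) := by
      refine ih (LinearMap.funLeft A A Fin.castSucc ∘ₗ f ∘ₗ (LinearMap.ker q).subtype) ?_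
      refine (injective_iff_map_eq_zero _).2 fun x hx => Subtype.ext (hf ?_)
      have hlast : f x (Fin.last k) = 0 := congrArg Subtype.val x.2
      rw [Submodule.coe_zero, map_zero]
      funext i
      induction i using Fin.lastCases with
      | last => exact hlast
      | cast j => exact congrFun hx j
    exact Module.finitePresentation_of_ker q hq

theorem Submodule.FG.finitePresentation {M : Type*} [AddCommGroup M] [Module A M]
    [Module.FinitePresentation A M] {S : Submodule A M} (hS : S.FG) :
    Module.FinitePresentation A S := by
  -- The preimage of `S` in `A ^ m` is finitely generated, hence finitely presented, and `S` is
  -- its quotient by the finitely generated kernel of `A ^ m → M`.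
  obtain ⟨m, p, hp⟩ := Module.Finite.exists_fin' A M
  have hker : (LinearMap.ker p).FG := Module.FinitePresentation.fg_ker p hp
  have hle : LinearMap.ker p ≤ S.comap p := LinearMap.ker_le_comap p
  have hS' : (S.comap p).FG := by
    refine Submodule.fg_of_fg_map_of_fg_inf_ker p ?_ ?_
    · rwa [Submodule.map_comap_eq_of_surjective hp]
    · rwa [inf_eq_right.mpr hle]
  have : Module.Finite A (S.comap p) := .of_fg hS'
  have : Module.FinitePresentation A (S.comap p) :=
    IsCoherentRing.finitePresentation_of_injective_pi _ (Submodule.injective_subtype _)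
  let r : S.comap p →ₗ[A] S := p.restrict fun _ hx => hx
  have hr : Function.Surjective r := by
    rintro ⟨y, hy⟩
    obtain ⟨x, rfl⟩ := hp y
    exact ⟨⟨x, hy⟩, rfl⟩
  refine Module.finitePresentation_of_surjective r hr ?_
  rw [LinearMap.ker_restrict]
  refine Submodule.fg_of_fg_map_injective _ (Submodule.injective_subtype _) ?_
  rwa [Submodule.map_comap_subtype, inf_eq_right.mpr hle]

theorem LinearMap.finitePresentation_ker {M N : Type*} [AddCommGroup M] [Module A M]
    [AddCommGroup N] [Module A N] [Module.FinitePresentation A M] [Module.FinitePresentation A N]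
    (f : M →ₗ[A] N) : Module.FinitePresentation A (ker f) := by
  have : Module.FinitePresentation A (range f) := (Submodule.fg_range f).finitePresentation
  have hker := Module.FinitePresentation.fg_ker f.rangeRestrict f.surjective_rangeRestrict
  rw [ker_rangeRestrict] at hker
  exact hker.finitePresentation

end Coherent

namespace CategoryTheory.ShortComplex

variable {A : Type*} [CommRing A] [IsCoherentRing A]

theorem finitePresentation_homology (S : ShortComplex (ModuleCat A)) [Module.Finite A S.X₁]
    [Module.FinitePresentation A S.X₂] [Module.FinitePresentation A S.X₃] :
    Module.FinitePresentation A S.homology := by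
  have : Module.FinitePresentation A (LinearMap.ker S.g.hom) := S.g.hom.finitePresentation_ker
  have : Module.FinitePresentation A
      (LinearMap.ker S.g.hom ⧸ LinearMap.range S.moduleCatToCycles) :=
    Module.finitePresentation_of_surjective (LinearMap.range S.moduleCatToCycles).mkQ
      (Submodule.mkQ_surjective _) (by rw [Submodule.ker_mkQ]; exact Submodule.fg_range _)
  have : Module.FinitePresentation A S.moduleCatLeftHomologyData.H := this
  exact .of_equiv S.moduleCatHomologyIso.symm.toLinearEquiv

end CategoryTheory.ShortComplex

theorem HomologicalComplex.finitePresentation_homology {A : Type*} [CommRing A]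
    [IsCoherentRing A] {ι : Type*} {c : ComplexShape ι} (K : HomologicalComplex (ModuleCat A) c)
    (hK : ∀ i, Module.FinitePresentation A (K.X i)) (i : ι) :
    Module.FinitePresentation A (K.homology i) := by
  have : Module.FinitePresentation A (K.sc i).X₁ := hK _
  have : Module.FinitePresentation A (K.sc i).X₂ := hK _
  have : Module.FinitePresentation A (K.sc i).X₃ := hK _
  exact (K.sc i).finitePresentation_homology

theorem Module.FinitePresentation.linearMap (A P N : Type*) [CommRing A] [AddCommGroup P]
    [Module A P] [AddCommGroup N] [Module A N] [Module.Free A P] [Module.Finite A P]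
    [Module.FinitePresentation A N] : Module.FinitePresentation A (P →ₗ[A] N) :=
  .of_equiv ((Module.Free.chooseBasis A P).constr A)

theorem LinearMap.exact_subtype_ker_comp_of_surjective {A F N P : Type*} [CommRing A]
    [AddCommGroup F] [Module A F] [AddCommGroup N] [Module A N] [AddCommGroup P] [Module A P]
    {g : N →ₗ[A] P} {p : F →ₗ[A] ker g} (hp : Function.Surjective p) :
    Function.Exact ((ker g).subtype ∘ₗ p) g :=
  hp.comp_exact_iff_exact.2 g.exact_subtype_ker_map

namespace CategoryTheory.ProjectiveResolution

variable {C : Type*} [Category C] [Abelian C]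

noncomputable def ofExact {Z : C} (X : ℕ → C) [∀ n, Projective (X n)]
    (d : ∀ n, X (n + 1) ⟶ X n) (sq : ∀ n, d (n + 1) ≫ d n = 0) (ε : X 0 ⟶ Z)
    (hε : d 0 ≫ ε = 0) [Epi ε] (exact₀ : (ShortComplex.mk (d 0) ε hε).Exact)
    (exact : ∀ n, (ShortComplex.mk (d (n + 1)) (d n) (sq n)).Exact) :
    ProjectiveResolution Z where
  complex := ChainComplex.of X d sq
  π := (ChainComplex.toSingle₀Equiv _ _).symm ⟨ε, (ChainComplex.of_d X d 0 ▸ hε :)⟩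
  quasiIso := ⟨fun n => by
    cases n with
    | zero =>
      rw [ChainComplex.quasiIsoAt₀_iff, ShortComplex.quasiIso_iff_of_zeros' _ rfl rfl rfl]
      refine (ShortComplex.exact_and_epi_g_iff_of_iso ?_).2 ⟨exact₀, ‹Epi ε›⟩
      have hd : (ChainComplex.of X d sq).d 1 0 = d 0 := ChainComplex.of_d X d 0
      have hπ : (((ChainComplex.of X d sq).toSingle₀Equiv Z).symm ⟨ε, (hd ▸ hε :)⟩).f 0 = ε :=
        ChainComplex.toSingle₀Equiv_symm_apply_f_zero (C := ChainComplex.of X d sq) ε _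
      exact ShortComplex.isoMk (Iso.refl _) (Iso.refl _) (Iso.refl _)
        ((Category.id_comp _).trans (hd.symm.trans (Category.comp_id _).symm))
        ((Category.id_comp _).trans (hπ.symm.trans (Category.comp_id _).symm))
    | succ n =>
      rw [quasiIsoAt_iff_exactAt' _ _ (ChainComplex.exactAt_succ_single_obj _ _),
        HomologicalComplex.exactAt_iff' _ (n + 1 + 1) (n + 1) n (by simp) (by simp)]
      dsimp only [HomologicalComplex.sc', HomologicalComplex.shortComplexFunctor']
      simpa only [ChainComplex.of_d] using exact n⟩

end CategoryTheory.ProjectiveResolution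

namespace Module.Finite

variable (A : Type*) [CommRing A] (X : Type*) [AddCommGroup X] [Module A X] [Module.Finite A X]

noncomputable def coverRank : ℕ :=
  (Module.Finite.exists_fin' A X).choose

noncomputable def cover : (Fin (coverRank A X) → A) →ₗ[A] X :=
  (Module.Finite.exists_fin' A X).choose_spec.choose

theorem cover_surjective : Function.Surjective (cover A X) :=
  (Module.Finite.exists_fin' A X).choose_spec.choose_spec

end Module.Finite

structure FPModuleCat (A : Type u) [CommRing A] where
  obj : ModuleCat.{u} A
  [finitePresentation : Module.FinitePresentation A obj]

attribute [instance] FPModuleCat.finitePresentation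

namespace FPModuleCat

variable {A : Type u} [CommRing A] [IsCoherentRing A]

noncomputable def syzygy (X : FPModuleCat A) : FPModuleCat A :=
  have := (Module.Finite.cover A X.obj).finitePresentation_ker
  ⟨.of A (LinearMap.ker (Module.Finite.cover A X.obj))⟩

noncomputable def syzygies (M : FPModuleCat A) : ℕ → FPModuleCat A
  | 0 => M
  | n + 1 => (syzygies M n).syzygy

noncomputable abbrev freeResolutionTerm (M : FPModuleCat A) (n : ℕ) : ModuleCat.{u} A :=
  .of A (Fin (Module.Finite.coverRank A (M.syzygies n).obj) → A)

noncomputable def freeResolutionDiff (M : FPModuleCat A) (n : ℕ) :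
    M.freeResolutionTerm (n + 1) ⟶ M.freeResolutionTerm n :=
  ModuleCat.ofHom ((LinearMap.ker (Module.Finite.cover A (M.syzygies n).obj)).subtype ∘ₗ
    Module.Finite.cover A (M.syzygies (n + 1)).obj)

theorem exact_freeResolutionDiff_zero (M : FPModuleCat A) :
    Function.Exact (M.freeResolutionDiff 0).hom (Module.Finite.cover A M.obj) :=
  LinearMap.exact_subtype_ker_comp_of_surjective
    (Module.Finite.cover_surjective A (M.syzygies 1).obj)

theorem exact_freeResolutionDiff (M : FPModuleCat A) (n : ℕ) :
    Function.Exact (M.freeResolutionDiff (n + 1)).hom (M.freeResolutionDiff n).hom :=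
  (Submodule.injective_subtype _).comp_exact_iff_exact.2
    (LinearMap.exact_subtype_ker_comp_of_surjective
      (Module.Finite.cover_surjective A (M.syzygies (n + 2)).obj))

noncomputable def freeResolution (M : FPModuleCat A) : ProjectiveResolution M.obj :=
  have : Epi (ModuleCat.ofHom (Module.Finite.cover A M.obj) : M.freeResolutionTerm 0 ⟶ M.obj) :=
    (ModuleCat.epi_iff_surjective _).2 (Module.Finite.cover_surjective A M.obj)
  ProjectiveResolution.ofExact M.freeResolutionTerm M.freeResolutionDiff
    (fun n => ModuleCat.hom_ext (M.exact_freeResolutionDiff n).linearMap_comp_eq_zero)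
    (ModuleCat.ofHom (Module.Finite.cover A M.obj))
    (ModuleCat.hom_ext M.exact_freeResolutionDiff_zero.linearMap_comp_eq_zero)
    ((ShortComplex.ShortExact.moduleCat_exact_iff_function_exact _).2
      M.exact_freeResolutionDiff_zero)
    (fun n => (ShortComplex.ShortExact.moduleCat_exact_iff_function_exact _).2
      (M.exact_freeResolutionDiff n))

instance (M : FPModuleCat A) (n : ℕ) : Module.Free A (M.freeResolution.complex.X n) :=
  inferInstanceAs (Module.Free A (M.freeResolutionTerm n))

instance (M : FPModuleCat A) (n : ℕ) : Module.Finite A (M.freeResolution.complex.X n) :=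
  inferInstanceAs (Module.Finite A (M.freeResolutionTerm n))

end FPModuleCat

theorem ext_finitePresentation_of_coherent
    (A : Type u) [CommRing A]
    (hcoh : ∀ I : Ideal A, I.FG → Module.FinitePresentation A I)
    (M N : Type u) [AddCommGroup M] [Module A M] [AddCommGroup N] [Module A N]
    [Module.FinitePresentation A M] [Module.FinitePresentation A N] (n : ℕ) :
    Module.FinitePresentation A
      (((Ext A (ModuleCat.{u} A) n).obj (Opposite.op (ModuleCat.of A M))).obj
        (ModuleCat.of A N)) := by
  have : IsCoherentRing A := ⟨hcoh⟩
  let P := FPModuleCat.freeResolution ⟨ModuleCat.of A M⟩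
  have hHom : ∀ i, Module.FinitePresentation A
      ((P.complex.linearYonedaObj A (ModuleCat.of A N)).X i) := fun i =>
    have := Module.FinitePresentation.linearMap A (P.complex.X i) N
    .of_equiv ModuleCat.homLinearEquiv.symm
  have := HomologicalComplex.finitePresentation_homology _ hHom n
  exact .of_equiv (P.isoExt n (ModuleCat.of A N)).toLinearEquiv.symm
end

section
/- Let A be a coherent commutative ring and suppose M is a finitely presented A-module. Then for every m ≥ 0 there exists an exact sequence F_m → F_{m-1} → ... → F_0 → M → 0 with each F_i a finitely generated free A-module. -/
/-!
STATEMENT 16: Over a coherent commutative ring, every finitely presented module `M` admits,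
for each `m ≥ 0`, an exact sequence `F_m → F_{m-1} → … → F_0 → M → 0` with each `F_i` a
finitely generated free module (i.e. `M` is pseudo-coherent).
-/

universe u

section Aux

variable (A : Type u) [CommRing A]

lemma fpOfLinearEquiv {M N : Type u} [AddCommGroup M] [Module A M]
    [AddCommGroup N] [Module A N] [Module.FinitePresentation A M] (e : M ≃ₗ[A] N) :
    Module.FinitePresentation A N :=
  Module.finitePresentation_of_surjective e.toLinearMap e.surjective
    (by rw [LinearMap.ker_eq_bot.mpr e.injective]; exact Submodule.fg_bot)

set_option synthInstance.maxHeartbeats 400000 in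
set_option maxHeartbeats 800000 in
lemma coherentSubmoduleFP
    (hcoh : ∀ I : Ideal A, I.FG → Module.FinitePresentation A I) :
    ∀ n : ℕ, ∀ N : Submodule A (Fin n → A), N.FG → Module.FinitePresentation A N := by
  intro n
  induction n with
  | zero =>
    intro N hN
    haveI : Subsingleton (Fin 0 → A) := by
      constructor; intro a b; funext i; exact absurd i.2 (by omega)
    haveI : Subsingleton N := ⟨fun a b => Subtype.ext (Subsingleton.elim _ _)⟩
    haveI : Module.Finite A N := Module.Finite.iff_fg.mpr hN
    exact Module.finitePresentation_of_projective A N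
  | succ n ih =>
    intro N hN
    haveI : Module.Finite A N := Module.Finite.iff_fg.mpr hN
    let π : (Fin (n + 1) → A) →ₗ[A] A := LinearMap.proj (Fin.last n)
    let l : N →ₗ[A] A := π ∘ₗ N.subtype
    have hI : (LinearMap.range l).FG := by
      rw [LinearMap.range_eq_map]
      exact ((Submodule.fg_top _).mpr hN).map l
    haveI : Module.FinitePresentation A (LinearMap.range l) := hcoh _ hI
    have hl' : Function.Surjective l.rangeRestrict := LinearMap.surjective_rangeRestrict l
    have hker : (LinearMap.ker l.rangeRestrict).FG :=
      Module.FinitePresentation.fg_ker l.rangeRestrict hl'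
    let ι : (LinearMap.ker l.rangeRestrict) →ₗ[A] (Fin n → A) :=
      (LinearMap.funLeft A A Fin.castSucc) ∘ₗ N.subtype ∘ₗ (LinearMap.ker l.rangeRestrict).subtype
    have hinj : Function.Injective ι := by
      intro x y hxy
      ext j
      refine Fin.lastCases ?_ ?_ j
      · have hx0 : l.rangeRestrict x.1 = 0 := x.2
        have hy0 : l.rangeRestrict y.1 = 0 := y.2
        have hx : (x.1.1 : Fin (n + 1) → A) (Fin.last n) = 0 := congrArg Subtype.val hx0
        have hy : (y.1.1 : Fin (n + 1) → A) (Fin.last n) = 0 := congrArg Subtype.val hy0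
        exact hx.trans hy.symm
      · intro i
        exact congrFun hxy i
    have hrange : (LinearMap.range ι).FG := by
      rw [LinearMap.range_eq_map]
      exact ((Submodule.fg_top _).mpr hker).map ι
    haveI : Module.FinitePresentation A (LinearMap.range ι) := ih _ hrange
    haveI : Module.FinitePresentation A (LinearMap.ker l.rangeRestrict) := by
      let e := (LinearEquiv.ofInjective ι hinj).symm
      exact Module.FinitePresentation.of_equiv (R := A) (M := LinearMap.range ι)
        (N := LinearMap.ker l.rangeRestrict) e
    exact Module.finitePresentation_of_ker l.rangeRestrict hl'

lemma fpKer (hcoh : ∀ I : Ideal A, I.FG → Module.FinitePresentation A I)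
    (n : ℕ) {M : Type u} [AddCommGroup M] [Module A M] [Module.FinitePresentation A M]
    (f : (Fin n → A) →ₗ[A] M) (hf : Function.Surjective f) :
    Module.FinitePresentation A (LinearMap.ker f) :=
  coherentSubmoduleFP A hcoh n _ (Module.FinitePresentation.fg_ker f hf)

structure ChainData where
  N : ModuleCat.{u} A
  fp : Module.FinitePresentation A N
  n : ℕ
  φ : (Fin n → A) →ₗ[A] N
  surj : Function.Surjective φ

noncomputable def mkStep (N : Type u) [AddCommGroup N] [Module A N] [Module.Finite A N] :
    Σ' (n : ℕ) (φ : (Fin n → A) →ₗ[A] N), Function.Surjective φ :=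
  ⟨(Module.Finite.exists_fin' A N).choose, (Module.Finite.exists_fin' A N).choose_spec.choose,
   (Module.Finite.exists_fin' A N).choose_spec.choose_spec⟩

noncomputable def chain (hcoh : ∀ I : Ideal A, I.FG → Module.FinitePresentation A I)
    (M : Type u) [AddCommGroup M] [Module A M] [Module.FinitePresentation A M] :
    ℕ → ChainData A
  | 0 => ⟨ModuleCat.of A M, ‹_›, (mkStep A M).1, (mkStep A M).2.1, (mkStep A M).2.2⟩
  | (k + 1) =>
    let P := chain hcoh M k
    haveI := P.fp
    haveI : Module.FinitePresentation A (LinearMap.ker P.φ) := fpKer A hcoh P.n P.φ P.surj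
    ⟨ModuleCat.of A (LinearMap.ker P.φ), ‹_›, (mkStep A (LinearMap.ker P.φ)).1,
      (mkStep A (LinearMap.ker P.φ)).2.1, (mkStep A (LinearMap.ker P.φ)).2.2⟩

end Aux

theorem finitePresentation_pseudoCoherent_of_coherent
    (A : Type u) [CommRing A]
    (hcoh : ∀ I : Ideal A, I.FG → Module.FinitePresentation A I)
    (M : Type u) [AddCommGroup M] [Module A M] [Module.FinitePresentation A M]
    (m : ℕ) :
    ∃ (F : ℕ → ModuleCat.{u} A) (d : ∀ i : ℕ, ↥(F (i + 1)) →ₗ[A] ↥(F i))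
      (f : ↥(F 0) →ₗ[A] M),
      (∀ i ≤ m, Module.Free A ↥(F i) ∧ Module.Finite A ↥(F i)) ∧
      Function.Surjective f ∧
      (0 < m → Function.Exact (d 0) f) ∧
      (∀ i : ℕ, i + 1 < m → Function.Exact (d (i + 1)) (d i)) := by
  classical
  let C : ℕ → ChainData A := chain A hcoh M
  let F : ℕ → ModuleCat.{u} A := fun i => ModuleCat.of A (Fin (C i).n → A)
  let ψ : ∀ i : ℕ, (Fin (C (i + 1)).n → A) →ₗ[A] LinearMap.ker (C i).φ := fun i => (C (i + 1)).φ
  let d : ∀ i : ℕ, ↥(F (i + 1)) →ₗ[A] ↥(F i) := fun i =>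
    (LinearMap.ker (C i).φ).subtype ∘ₗ ψ i
  let f : ↥(F 0) →ₗ[A] M := (show (Fin (C 0).n → A) →ₗ[A] M from (C 0).φ)
  have key : ∀ i, LinearMap.range (d i) = LinearMap.ker (C i).φ := by
    intro i
    show LinearMap.range ((LinearMap.ker (C i).φ).subtype ∘ₗ ψ i) = _
    rw [LinearMap.range_comp, LinearMap.range_eq_top.mpr (show Function.Surjective (ψ i) from (C (i + 1)).surj),
      Submodule.map_top, Submodule.range_subtype]
  have kd : ∀ i, LinearMap.ker (d i) = LinearMap.ker (ψ i) := by
    intro i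
    show LinearMap.ker ((LinearMap.ker (C i).φ).subtype ∘ₗ ψ i) = _
    rw [LinearMap.ker_comp, Submodule.ker_subtype, Submodule.comap_bot]
  refine ⟨F, d, f, ?_, (C 0).surj, ?_, ?_⟩
  · intro i _
    exact ⟨inferInstanceAs (Module.Free A (Fin (C i).n → A)),
      inferInstanceAs (Module.Finite A (Fin (C i).n → A))⟩
  · intro _
    rw [LinearMap.exact_iff, key 0]
    rfl
  · intro i _
    rw [LinearMap.exact_iff, key (i + 1), kd i]
    rfl
end
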